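/- arXiv:2504.02430 — 2 statements merged into one kernel-verified Lean document; each statement's English description precedes it below -/
import Mathlib

section
/- For any structural causal model M and value assignment i on internal variables I, the causal systems CS(M_i) (Bochman transformation of the intervened model) and CS(M)_i (intervened Bochman transformation) have the same causal worlds. -/
/-- Propositional formulas over an alphabet `α`. -/
inductive Form (α : Type) : Type where
  | atom : α → Form α
  | tru : Form α
  | fls : Form α
  | neg : Form α → Form α
  | conj : Form α → Form α → Form α
  | disj : Form α → Form α → Form α

variable {α : Type}

/-- Truth-value of a formula in a world (truth assignment). -/
def Form.eval (v : α → Bool) : Form α → Bool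
  | .atom a => v a
  | .tru => true
  | .fls => false
  | .neg φ => !φ.eval v
  | .conj φ ψ => φ.eval v && ψ.eval v
  | .disj φ ψ => φ.eval v || ψ.eval v

/-- Material implication. -/
def Form.impl (φ ψ : Form α) : Form α := .disj (.neg φ) ψ

/-- Biconditional. -/
def Form.iff (φ ψ : Form α) : Form α := .conj (φ.impl ψ) (ψ.impl φ)

/-- Classical (semantic) entailment, `Φ ⊢ ψ`. -/
def Entails (Φ : Set (Form α)) (ψ : Form α) : Prop :=
  ∀ v : α → Bool, (∀ φ ∈ Φ, φ.eval v = true) → ψ.eval v = true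

/-- Conjunction of a finite list of formulas. -/
def conjList (L : List (Form α)) : Form α := L.foldr .conj .tru

/-- Disjunction of a finite list of formulas. -/
def disjList (L : List (Form α)) : Form α := L.foldr .disj .fls

/-- Literals: an atom together with a polarity. -/
def litForm (l : α × Bool) : Form α := if l.2 then .atom l.1 else .neg (.atom l.1)

/-- The set of formulas true in a world: a world viewed as a maximal
deductively closed consistent set of formulas. -/
def worldSet (v : α → Bool) : Set (Form α) := {φ : Form α | φ.eval v = true}

/-- The smallest causal production inference relation containing the causal theory `Δ`:
closed under Strengthening, Weakening, And, Truth/Falsity, Cut and Or. -/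
inductive Derives (Δ : Set (Form α × Form α)) : Form α → Form α → Prop where
  | base {φ ψ} : (φ, ψ) ∈ Δ → Derives Δ φ ψ
  | strengthening {φ ψ ρ} : Entails {φ} ψ → Derives Δ ψ ρ → Derives Δ φ ρ
  | weakening {φ ψ ρ} : Derives Δ φ ψ → Entails {ψ} ρ → Derives Δ φ ρ
  | and {φ ψ ρ} : Derives Δ φ ψ → Derives Δ φ ρ → Derives Δ φ (ψ.conj ρ)
  | top : Derives Δ .tru .tru
  | bot : Derives Δ .fls .fls
  | cut {φ ψ ρ} : Derives Δ φ ψ → Derives Δ (φ.conj ψ) ρ → Derives Δ φ ρ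
  | or {φ ψ ρ} : Derives Δ φ ρ → Derives Δ ψ ρ → Derives Δ (φ.disj ψ) ρ

/-- The consequence operator `C` of the causal production inference relation
generated by `Δ`: `ψ ∈ C(Φ)` iff a finite conjunction from `Φ` produces `ψ`. -/
def Cons (Δ : Set (Form α × Form α)) (Φ : Set (Form α)) : Set (Form α) :=
  {ψ | ∃ L : List (Form α), (∀ φ ∈ L, φ ∈ Φ) ∧ Derives Δ (conjList L) ψ}

/-- A deterministic causal system: causal knowledge `Δ` (a causal theory given as a set
of (cause, effect) pairs), external premises `E` (a set of literals) and
observations `O`. -/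
structure CausalSystem (α : Type) where
  Δ : Set (Form α × Form α)
  E : Set (α × Bool)
  O : Set (Form α)

/-- The explanatory closure `Δ(CS) = Δ ∪ {l ⇒ l : l ∈ E}`. -/
def CausalSystem.closure (CS : CausalSystem α) : Set (Form α × Form α) :=
  CS.Δ ∪ {p | ∃ l ∈ CS.E, p = (litForm l, litForm l)}

/-- The external premises true in the world `v`. -/
def CausalSystem.extTrue (CS : CausalSystem α) (v : α → Bool) : Set (Form α) :=
  {φ | ∃ l ∈ CS.E, φ = litForm l ∧ (litForm l).eval v = true}

/-- `v` is a causal world of the causal system: `C(ω ∩ E) = ω` and `ω ⊨ O`. -/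
def CausalSystem.CausalWorld (CS : CausalSystem α) (v : α → Bool) : Prop :=
  Cons CS.closure (CS.extTrue v) = worldSet v ∧ ∀ o ∈ CS.O, o.eval v = true

/-- `occurs a φ`: the atom `a` occurs in the formula `φ`. -/
def Form.occurs (a : α) : Form α → Prop
  | .atom b => a = b
  | .tru => False
  | .fls => False
  | .neg φ => φ.occurs a
  | .conj φ ψ => φ.occurs a ∨ ψ.occurs a
  | .disj φ ψ => φ.occurs a ∨ ψ.occurs a

/-- A Boolean structural causal model presented propositionally: external variables
`U`, internal variables `V`, and for each internal variable `v` its structural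
function `F v`, a propositional formula over `U ⊕ V` (its atoms among the parents
`Pa v ⊆ V` and error terms `Err v ⊆ U`). -/
structure PSCM (U V : Type) where
  F : V → Form (U ⊕ V)

/-- `p` is a parent of `q` iff `p` occurs in `F q`; `M` is acyclic if the resulting
causal diagram has no directed cycles. -/
def PSCM.Acyclic {U V : Type} (M : PSCM U V) : Prop :=
  ∀ v : V, ¬ Relation.TransGen (fun a b : V => (M.F b).occurs (Sum.inr a)) v v

/-- A solution of `M`: an assignment satisfying all structural equations `v := F v`. -/
def PSCM.IsSolution {U V : Type} (M : PSCM U V) (s : U ⊕ V → Bool) : Prop :=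
  ∀ v : V, s (Sum.inr v) = (M.F v).eval s

/-- The Bochman transformation of `M`: causal knowledge `{F_V ⇒ V : V ∈ 𝐕}`, external
premises `E = U ∪ {¬W : W ∈ U ∪ V}`, no observations. -/
def PSCM.bochman {U V : Type} (M : PSCM U V) : CausalSystem (U ⊕ V) where
  Δ := {p | ∃ v : V, p = (M.F v, Form.atom (Sum.inr v))}
  E := {l | (∃ u : U, l = (Sum.inl u, true)) ∨ l.2 = false}
  O := ∅

/-- The modified model `M_i`: the structural function of an intervened variable is
replaced by the constant prescribed by `i` (`i v = none` means `v` is not intervened on). -/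
def PSCM.intervene {U V : Type} (M : PSCM U V) (i : V → Option Bool) : PSCM U V where
  F := fun v =>
    match i v with
    | some true => Form.tru
    | some false => Form.fls
    | none => M.F v

/-- The modified causal system `CS_i`: remove all rules whose head is `p` or `¬p` for
an intervened atom `p`, remove the external premises `p`, `¬p` for intervened `p`, and
add the rule `⊤ ⇒ l` for every literal `l` set by `i`. -/
def CausalSystem.intervene {U V : Type} (CS : CausalSystem (U ⊕ V)) (i : V → Option Bool) :
    CausalSystem (U ⊕ V) where
  Δ := {r ∈ CS.Δ | ∀ v : V, (r.2 = Form.atom (Sum.inr v) ∨ r.2 = Form.neg (Form.atom (Sum.inr v)))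
          → i v = none} ∪
       {r | ∃ (v : V) (b : Bool), i v = some b ∧ r = (Form.tru, litForm (Sum.inr v, b))}
  E := {l ∈ CS.E | ∀ v : V, l.1 = Sum.inr v → i v = none}
  O := CS.O


section Aux
variable {α : Type}

lemma entails_single {φ ψ : Form α} (h : ∀ w, φ.eval w = true → ψ.eval w = true) :
    Entails {φ} ψ := fun w hw => h w (hw φ rfl)

lemma derives_fls {Δ : Set (Form α × Form α)} (ψ : Form α) : Derives Δ .fls ψ :=
  .weakening .bot (entails_single (by intro w h; simp [Form.eval] at h))

lemma derives_of_tru {Δ : Set (Form α × Form α)} {ψ : Form α} (φ : Form α)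
    (h : Derives Δ .tru ψ) : Derives Δ φ ψ :=
  .strengthening (entails_single (by intro w _; rfl)) h

lemma derives_contra {Δ : Set (Form α × Form α)} {φ ψ : Form α} (ρ : Form α)
    (h : Derives Δ φ ψ) (hc : ∀ w, φ.eval w = true → ψ.eval w = true → False) :
    Derives Δ φ ρ :=
  .cut h (.strengthening (entails_single (by
      intro w hw; simp [Form.eval] at hw; exact (hc w hw.1 hw.2).elim)) (derives_fls ρ))

lemma derives_mono {Δ₁ Δ₂ : Set (Form α × Form α)}
    (h : ∀ p ∈ Δ₁, Derives Δ₂ p.1 p.2) {φ ψ : Form α} (d : Derives Δ₁ φ ψ) :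
    Derives Δ₂ φ ψ := by
  induction d with
  | base hp => exact h _ hp
  | strengthening he _ ih => exact .strengthening he ih
  | weakening _ he ih => exact .weakening ih he
  | and _ _ ih1 ih2 => exact .and ih1 ih2
  | top => exact .top
  | bot => exact .bot
  | cut _ _ ih1 ih2 => exact .cut ih1 ih2
  | or _ _ ih1 ih2 => exact .or ih1 ih2

lemma conjList_eval (w : α → Bool) (L : List (Form α)) :
    (conjList L).eval w = L.all (fun φ => φ.eval w) := by
  induction L with
  | nil => simp [conjList, Form.eval]
  | cons φ L ih => simp [conjList, Form.eval] at ih ⊢; rw [ih]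

end Aux
section Aux2
variable {α : Type}

lemma derives_absorb {Δ : Set (Form α × Form α)} {Φ : Set (Form α)} :
    ∀ (L : List (Form α)) (χ ψ : Form α),
      (∀ φ ∈ L, φ ∈ Φ ∨ Derives Δ .tru φ) →
      Derives Δ (χ.conj (conjList L)) ψ →
      ∃ M : List (Form α), (∀ φ ∈ M, φ ∈ Φ) ∧ Derives Δ (χ.conj (conjList M)) ψ
  | [], χ, ψ, _, d => ⟨[], by simp, d⟩
  | φ :: L, χ, ψ, h, d => by
    rcases h φ (by simp) with hmem | htru
    · have d' : Derives Δ ((χ.conj φ).conj (conjList L)) ψ :=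
        .strengthening (entails_single (by
          intro w hw; simp [Form.eval, conjList] at hw ⊢; tauto)) d
      obtain ⟨M, hM, dM⟩ := derives_absorb L (χ.conj φ) ψ (fun x hx => h x (by simp [hx])) d'
      refine ⟨φ :: M, ?_, ?_⟩
      · intro x hx; rcases List.mem_cons.mp hx with rfl | hx
        · exact hmem
        · exact hM x hx
      · exact .strengthening (entails_single (by
          intro w hw; simp [Form.eval, conjList] at hw ⊢; tauto)) dM
    · have d1 : Derives Δ (χ.conj (conjList L)) φ := derives_of_tru _ htru
      have d2 : Derives Δ ((χ.conj (conjList L)).conj φ) ψ :=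
        .strengthening (entails_single (by
          intro w hw; simp [Form.eval, conjList] at hw ⊢; tauto)) d
      exact derives_absorb L χ ψ (fun x hx => h x (by simp [hx])) (.cut d1 d2)

lemma cons_absorb {Δ : Set (Form α × Form α)} {Φ : Set (Form α)} {ψ : Form α}
    (L : List (Form α)) (h : ∀ φ ∈ L, φ ∈ Φ ∨ Derives Δ .tru φ)
    (d : Derives Δ (conjList L) ψ) : ψ ∈ Cons Δ Φ := by
  obtain ⟨M, hM, dM⟩ := derives_absorb L .tru ψ h
    (.strengthening (entails_single (by intro w hw; simp [Form.eval] at hw ⊢; tauto)) d)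
  exact ⟨M, hM, .strengthening (entails_single (by
    intro w hw; simp [Form.eval]; tauto)) dM⟩

lemma derives_sound_pair {Δ : Set (Form α × Form α)} (u : α → Bool) (T : Set (Form α))
    (htru : Form.tru ∈ T)
    (hent : ∀ ψ ρ : Form α, ψ ∈ T → Entails {ψ} ρ → ρ ∈ T)
    (hconj : ∀ ψ ρ : Form α, ψ ∈ T → ρ ∈ T → ψ.conj ρ ∈ T)
    (hsub : ∀ ψ ∈ T, ψ.eval u = true)
    (hbase : ∀ p ∈ Δ, p.1.eval u = true → p.2 ∈ T)
    {φ ψ : Form α} (d : Derives Δ φ ψ) : φ.eval u = true → ψ ∈ T := by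
  induction d with
  | base hp => exact hbase _ hp
  | @strengthening φ' ψ' ρ' he _ ih => exact fun h => ih (he u (by simpa using h))
  | weakening _ he ih => exact fun h => hent _ _ (ih h) he
  | and _ _ ih1 ih2 => exact fun h => hconj _ _ (ih1 h) (ih2 h)
  | top => exact fun _ => htru
  | bot => intro h; simp [Form.eval] at h
  | @cut φ' ψ' ρ' _ _ ih1 ih2 =>
    intro h
    have hψ : ψ' ∈ T := ih1 h
    exact ih2 (by simp [Form.eval, h, hsub _ hψ])
  | @or φ' ψ' ρ' _ _ ih1 ih2 =>
    intro h
    simp [Form.eval] at h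
    rcases h with h | h
    · exact ih1 h
    · exact ih2 h

lemma rules_hold {Δc : Set (Form α × Form α)} {Φ : Set (Form α)} {ω : α → Bool}
    (h : Cons Δc Φ = worldSet ω) {a b : Form α} (hab : (a, b) ∈ Δc)
    (ha : a.eval ω = true) : b.eval ω = true := by
  have hmem : a ∈ Cons Δc Φ := by rw [h]; exact ha
  obtain ⟨L, hL, d⟩ := hmem
  have d2 : Derives Δc ((conjList L).conj a) b :=
    .strengthening (entails_single (by intro w hw; simp [Form.eval] at hw; tauto)) (.base hab)
  have hb : b ∈ Cons Δc Φ := ⟨L, hL, .cut d d2⟩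
  rw [h] at hb; exact hb

end Aux2
section Aux3
variable {U V : Type}

lemma litForm_true (a : U ⊕ V) : litForm (a, true) = Form.atom a := rfl
lemma litForm_false (a : U ⊕ V) : litForm (a, false) = Form.neg (Form.atom a) := rfl

lemma A_to_B (M : PSCM U V) (i : V → Option Bool) :
    ∀ p ∈ (M.intervene i).bochman.closure,
      Derives (M.bochman.intervene i).closure p.1 p.2 := by
  rintro ⟨a, b⟩ hp
  rcases hp with hΔ | hE
  · obtain ⟨v, hv⟩ := hΔ
    cases hiv : i v with
    | none =>
      have hv' : (a, b) = (M.F v, Form.atom (Sum.inr v)) := by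
        simpa [PSCM.bochman, PSCM.intervene, hiv] using hv
      rw [Prod.mk.injEq] at hv'
      obtain ⟨rfl, rfl⟩ := hv'
      refine Derives.base (Or.inl (Or.inl ⟨⟨v, rfl⟩, ?_⟩))
      intro v' hv'
      rcases hv' with h | h
      · simp only [Form.atom.injEq, Sum.inr.injEq] at h; subst h; exact hiv
      · exact absurd h (by simp)
    | some bb =>
      cases bb with
      | true =>
        have hv' : (a, b) = (Form.tru, Form.atom (Sum.inr v)) := by
          simpa [PSCM.bochman, PSCM.intervene, hiv] using hv
        rw [Prod.mk.injEq] at hv'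
        obtain ⟨rfl, rfl⟩ := hv'
        exact Derives.base (Or.inl (Or.inr ⟨v, true, hiv, by simp [litForm]⟩))
      | false =>
        have hv' : (a, b) = (Form.fls, Form.atom (Sum.inr v)) := by
          simpa [PSCM.bochman, PSCM.intervene, hiv] using hv
        rw [Prod.mk.injEq] at hv'
        obtain ⟨rfl, rfl⟩ := hv'
        exact derives_fls _
  · obtain ⟨l, hl, hpl⟩ := hE
    rw [Prod.mk.injEq] at hpl
    obtain ⟨rfl, rfl⟩ := hpl
    obtain ⟨c, e⟩ := l
    cases c with
    | inl u =>
      refine Derives.base (Or.inr ⟨(Sum.inl u, e), ⟨hl, ?_⟩, rfl⟩)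
      intro v h; simp at h
    | inr v =>
      have he : e = false := by
        rcases hl with ⟨u, hu⟩ | h
        · exact absurd (congrArg Prod.fst hu) (by simp)
        · exact h
      subst he
      cases hiv : i v with
      | none =>
        exact Derives.base (Or.inr ⟨(Sum.inr v, false), ⟨hl, by
          intro v' h; simp at h; subst h; exact hiv⟩, rfl⟩)
      | some bb =>
        cases bb with
        | true =>
          have hbase : Derives (M.bochman.intervene i).closure Form.tru (Form.atom (Sum.inr v)) :=
            Derives.base (Or.inl (Or.inr ⟨v, true, hiv, by simp [litForm]⟩))
          have h1 : Derives (M.bochman.intervene i).closure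
              (litForm (Sum.inr v, false)) (Form.atom (Sum.inr v)) :=
            derives_of_tru _ hbase
          exact derives_contra _ h1 (by
            intro w hw1 hw2; simp [litForm, Form.eval] at hw1; simp [Form.eval] at hw2
            simp [hw2] at hw1)
        | false =>
          have hbase : Derives (M.bochman.intervene i).closure Form.tru
              (litForm (Sum.inr v, false)) :=
            Derives.base (Or.inl (Or.inr ⟨v, false, hiv, rfl⟩))
          exact derives_of_tru _ hbase

end Aux3
section Aux4
variable {U V : Type}

lemma entails_elim {α : Type} {φ ψ : Form α} (h : Entails {φ} ψ) (w : α → Bool)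
    (hw : φ.eval w = true) : ψ.eval w = true :=
  h w (fun χ hχ => by rw [Set.mem_singleton_iff] at hχ; rw [hχ]; exact hw)

lemma B_to_A (M : PSCM U V) (i : V → Option Bool) {φ ψ : Form (U ⊕ V)}
    (d : Derives (M.bochman.intervene i).closure φ ψ) :
    ∃ N : List (Form (U ⊕ V)),
      (∀ χ ∈ N, ∃ v, i v = some false ∧ χ = litForm (Sum.inr v, false)) ∧
      Derives (M.intervene i).bochman.closure (φ.conj (conjList N)) ψ := by
  induction d with
  | @base a b hp =>
    rcases hp with (⟨hΔ, hcond⟩ | ⟨v, bb, hiv, heq⟩) | ⟨l, ⟨hlE, _⟩, heq⟩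
    · obtain ⟨v, hv⟩ := hΔ
      rw [Prod.mk.injEq] at hv
      obtain ⟨rfl, rfl⟩ := hv
      have hiv : i v = none := hcond v (Or.inl rfl)
      have hb : Derives (M.intervene i).bochman.closure (M.F v) (Form.atom (Sum.inr v)) :=
        Derives.base (Or.inl ⟨v, by simp [PSCM.intervene, hiv]⟩)
      exact ⟨[], by simp, .strengthening (entails_single (by
        intro w hw; simp [Form.eval, conjList] at hw ⊢ <;> tauto)) hb⟩
    · rw [Prod.mk.injEq] at heq
      obtain ⟨rfl, rfl⟩ := heq
      cases bb with
      | true =>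
        have hb : Derives (M.intervene i).bochman.closure Form.tru (litForm (Sum.inr v, true)) :=
          Derives.base (Or.inl ⟨v, by simp [PSCM.intervene, hiv, litForm]⟩)
        exact ⟨[], by simp, .strengthening (entails_single (by
          intro w hw; simp [Form.eval, conjList, litForm] at hw ⊢ <;> tauto)) hb⟩
      | false =>
        have hb : Derives (M.intervene i).bochman.closure
            (litForm (Sum.inr v, false)) (litForm (Sum.inr v, false)) :=
          Derives.base (Or.inr ⟨(Sum.inr v, false), Or.inr rfl, rfl⟩)
        exact ⟨[litForm (Sum.inr v, false)], by simp; exact ⟨v, hiv, rfl⟩,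
          .strengthening (entails_single (by
            intro w hw; simp [Form.eval, conjList, litForm] at hw ⊢ <;> tauto)) hb⟩
    · rw [Prod.mk.injEq] at heq
      obtain ⟨rfl, rfl⟩ := heq
      have hb : Derives (M.intervene i).bochman.closure (litForm l) (litForm l) :=
        Derives.base (Or.inr ⟨l, hlE, rfl⟩)
      exact ⟨[], by simp, .strengthening (entails_single (by
        intro w hw; simp [Form.eval, conjList] at hw ⊢ <;> tauto)) hb⟩
  | @strengthening φ' ψ' ρ' he _ ih =>
    obtain ⟨N, hN, dN⟩ := ih
    exact ⟨N, hN, .strengthening (entails_single (by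
      intro w hw; simp [Form.eval] at hw ⊢
      exact ⟨entails_elim he w hw.1, hw.2⟩)) dN⟩
  | @weakening φ' ψ' ρ' _ he ih =>
    obtain ⟨N, hN, dN⟩ := ih
    exact ⟨N, hN, .weakening dN he⟩
  | @and φ' ψ' ρ' _ _ ih1 ih2 =>
    obtain ⟨N₁, hN₁, d₁⟩ := ih1
    obtain ⟨N₂, hN₂, d₂⟩ := ih2
    refine ⟨N₁ ++ N₂, by intro χ hχ; rcases List.mem_append.mp hχ with h | h
                         · exact hN₁ χ h
                         · exact hN₂ χ h, ?_⟩
    have e₁ : Derives (M.intervene i).bochman.closure (φ'.conj (conjList (N₁ ++ N₂))) ψ' :=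
      .strengthening (entails_single (by
        intro w hw; simp [Form.eval, conjList_eval, List.all_append] at hw ⊢; tauto)) d₁
    have e₂ : Derives (M.intervene i).bochman.closure (φ'.conj (conjList (N₁ ++ N₂))) ρ' :=
      .strengthening (entails_single (by
        intro w hw; simp [Form.eval, conjList_eval, List.all_append] at hw ⊢; tauto)) d₂
    exact .and e₁ e₂
  | top =>
    have hb : Derives (M.bochman.intervene i).closure Form.tru Form.tru := .top
    exact ⟨[], by simp, .strengthening (entails_single (by
      intro w hw; rfl)) (.top : Derives (M.intervene i).bochman.closure Form.tru Form.tru)⟩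
  | bot =>
    exact ⟨[], by simp, .strengthening (entails_single (by
      intro w hw; simp [Form.eval, conjList] at hw ⊢ <;> tauto)) .bot⟩
  | @cut φ' ψ' ρ' _ _ ih1 ih2 =>
    obtain ⟨N₁, hN₁, d₁⟩ := ih1
    obtain ⟨N₂, hN₂, d₂⟩ := ih2
    refine ⟨N₁ ++ N₂, by intro χ hχ; rcases List.mem_append.mp hχ with h | h
                         · exact hN₁ χ h
                         · exact hN₂ χ h, ?_⟩
    have e₁ : Derives (M.intervene i).bochman.closure (φ'.conj (conjList (N₁ ++ N₂))) ψ' :=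
      .strengthening (entails_single (by
        intro w hw; simp [Form.eval, conjList_eval, List.all_append] at hw ⊢; tauto)) d₁
    have e₂ : Derives (M.intervene i).bochman.closure
        ((φ'.conj (conjList (N₁ ++ N₂))).conj ψ') ρ' :=
      .strengthening (entails_single (by
        intro w hw; simp [Form.eval, conjList_eval, List.all_append] at hw ⊢; tauto)) d₂
    exact .cut e₁ e₂
  | @or φ' ψ' ρ' _ _ ih1 ih2 =>
    obtain ⟨N₁, hN₁, d₁⟩ := ih1
    obtain ⟨N₂, hN₂, d₂⟩ := ih2
    refine ⟨N₁ ++ N₂, by intro χ hχ; rcases List.mem_append.mp hχ with h | h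
                         · exact hN₁ χ h
                         · exact hN₂ χ h, ?_⟩
    have e₁ : Derives (M.intervene i).bochman.closure (φ'.conj (conjList (N₁ ++ N₂))) ρ' :=
      .strengthening (entails_single (by
        intro w hw; simp [Form.eval, conjList_eval, List.all_append] at hw ⊢; tauto)) d₁
    have e₂ : Derives (M.intervene i).bochman.closure (ψ'.conj (conjList (N₁ ++ N₂))) ρ' :=
      .strengthening (entails_single (by
        intro w hw; simp [Form.eval, conjList_eval, List.all_append] at hw ⊢; tauto)) d₂
    exact .strengthening (entails_single (by
      intro w hw; simp [Form.eval] at hw ⊢; tauto)) (.or e₁ e₂)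

end Aux4
section Main
variable {U V : Type}

lemma cons_eq_of_compat (M : PSCM U V) (i : V → Option Bool) (ω : U ⊕ V → Bool)
    (hc : ∀ v b, i v = some b → ω (Sum.inr v) = b) :
    Cons (M.intervene i).bochman.closure ((M.intervene i).bochman.extTrue ω)
      = Cons (M.bochman.intervene i).closure ((M.bochman.intervene i).extTrue ω) := by
  apply Set.eq_of_subset_of_subset
  · rintro ψ ⟨L, hL, d⟩
    have d' := derives_mono (A_to_B M i) d
    refine cons_absorb L ?_ d'
    intro φ hφ
    obtain ⟨l, hlE, rfl, hev⟩ := hL φ hφ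
    obtain ⟨c, e⟩ := l
    cases c with
    | inl u => exact Or.inl ⟨(Sum.inl u, e), ⟨hlE, by intro v h; simp at h⟩, rfl, hev⟩
    | inr v =>
      have he : e = false := by
        rcases hlE with ⟨u, hu⟩ | h
        · exact absurd (congrArg Prod.fst hu) (by simp)
        · exact h
      subst he
      cases hiv : i v with
      | none =>
        exact Or.inl ⟨(Sum.inr v, false), ⟨hlE, by
          intro v' h; simp at h; subst h; exact hiv⟩, rfl, hev⟩
      | some b =>
        have hωv : ω (Sum.inr v) = false := by
          simpa [litForm, Form.eval] using hev
        have hb : b = false := by rw [← hc v b hiv]; exact hωv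
        subst hb
        exact Or.inr (Derives.base (Or.inl (Or.inr ⟨v, false, hiv, rfl⟩)))
  · rintro ψ ⟨L, hL, d⟩
    obtain ⟨N, hN, dN⟩ := B_to_A M i d
    refine ⟨L ++ N, ?_, ?_⟩
    · intro φ hφ
      rcases List.mem_append.mp hφ with h | h
      · obtain ⟨l, ⟨hlE, _⟩, rfl, hev⟩ := hL φ h
        exact ⟨l, hlE, rfl, hev⟩
      · obtain ⟨v, hiv, rfl⟩ := hN φ h
        refine ⟨(Sum.inr v, false), Or.inr rfl, rfl, ?_⟩
        simp [litForm, Form.eval, hc v false hiv]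
    · exact .strengthening (entails_single (by
        intro w hw
        simp [Form.eval, conjList_eval, List.all_append] at hw ⊢; tauto)) dN

lemma bochman_main_aux {U V : Type}
    (M : PSCM U V) (i : V → Option Bool) :
    ∀ ω : U ⊕ V → Bool,
      (M.intervene i).bochman.CausalWorld ω ↔ (M.bochman.intervene i).CausalWorld ω := by
  intro ω
  classical
  by_cases hc : ∀ v b, i v = some b → ω (Sum.inr v) = b
  · have heq := cons_eq_of_compat M i ω hc
    constructor
    · rintro ⟨h1, _⟩
      exact ⟨heq ▸ h1, by intro o ho; exact absurd ho (Set.notMem_empty o)⟩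
    · rintro ⟨h1, _⟩
      exact ⟨heq ▸ h1, by intro o ho; exact absurd ho (Set.notMem_empty o)⟩
  · push_neg at hc
    obtain ⟨v, b, hiv, hne⟩ := hc
    have hB : ¬ (M.bochman.intervene i).CausalWorld ω := by
      rintro ⟨h1, _⟩
      have hmem : litForm (Sum.inr v, b) ∈
          Cons (M.bochman.intervene i).closure ((M.bochman.intervene i).extTrue ω) :=
        ⟨[], by simp, Derives.base (Or.inl (Or.inr ⟨v, b, hiv, rfl⟩))⟩
      rw [h1] at hmem
      have : (litForm (Sum.inr v, b)).eval ω = true := hmem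
      cases b with
      | true => exact hne (by simpa [litForm, Form.eval] using this)
      | false => exact hne (by simpa [litForm, Form.eval] using this)
    have hA : ¬ (M.intervene i).bochman.CausalWorld ω := by
      rintro ⟨h1, _⟩
      cases b with
      | true =>
        have hmem : Form.atom (Sum.inr v) ∈
            Cons (M.intervene i).bochman.closure ((M.intervene i).bochman.extTrue ω) :=
          ⟨[], by simp, Derives.base (Or.inl ⟨v, by simp [PSCM.intervene, hiv, conjList]⟩)⟩
        rw [h1] at hmem
        exact hne (by simpa [worldSet, Form.eval] using hmem)
      | false =>
        have hωv : ω (Sum.inr v) = true := by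
          cases h : ω (Sum.inr v)
          · exact absurd h hne
          · rfl
        set ω' : U ⊕ V → Bool := fun a => if a = Sum.inr v then false else ω a with hω'
        set T : Set (Form (U ⊕ V)) :=
          {ψ | ψ.eval ω = true ∧ ψ.eval ω' = true} with hT
        have hbase : ∀ p ∈ (M.intervene i).bochman.closure,
            p.1.eval ω = true → p.2 ∈ T := ?_
        · have hatom : Form.atom (Sum.inr v) ∈
              Cons (M.intervene i).bochman.closure ((M.intervene i).bochman.extTrue ω) := by
            rw [h1]; simpa [worldSet, Form.eval] using hωv
          obtain ⟨L, hL, d⟩ := hatom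
          have hLe : (conjList L).eval ω = true := by
            rw [conjList_eval]
            refine List.all_eq_true.mpr ?_
            intro φ hφ
            obtain ⟨l, _, rfl, hev⟩ := hL φ hφ
            exact hev
          have : (Form.atom (Sum.inr v)).eval ω' = true :=
            (derives_sound_pair (Δ := (M.intervene i).bochman.closure) ω T
              ⟨rfl, rfl⟩
              (fun ψ ρ hψ he => ⟨entails_elim he ω hψ.1, entails_elim he ω' hψ.2⟩)
              (fun ψ ρ hψ hρ => by
                simp only [hT, Set.mem_setOf_eq, Form.eval] at hψ hρ ⊢
                exact ⟨by rw [hψ.1, hρ.1]; rfl, by rw [hψ.2, hρ.2]; rfl⟩)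
              (fun ψ hψ => hψ.1)
              hbase d hLe).2
          simp [Form.eval, hω'] at this
        · rintro ⟨a, φb⟩ hp hpe
          have hbω : φb.eval ω = true := rules_hold h1 hp hpe
          refine ⟨hbω, ?_⟩
          rcases hp with ⟨v', hv'⟩ | ⟨l, hlE, heq⟩
          · rw [Prod.mk.injEq] at hv'
            obtain ⟨rfl, rfl⟩ := hv'
            by_cases hvv : v' = v
            · rw [hvv] at hpe
              rw [show ((M.intervene i).F v, Form.atom (Sum.inr v)).1 = Form.fls
                by simp [PSCM.intervene, hiv]] at hpe
              simp [Form.eval] at hpe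
            · have : ω' (Sum.inr v') = ω (Sum.inr v') := by
                simp [hω', hvv]
              simpa [Form.eval, this] using hbω
          · rw [Prod.mk.injEq] at heq
            obtain ⟨rfl, rfl⟩ := heq
            obtain ⟨c, e⟩ := l
            cases e with
            | true =>
              obtain ⟨u, hu⟩ : ∃ u, (c, true) = (Sum.inl u, true) := by
                rcases hlE with ⟨u, hu⟩ | h
                · exact ⟨u, hu⟩
                · simp at h
              rw [Prod.mk.injEq] at hu
              rw [hu.1]
              have : ω' (Sum.inl u) = ω (Sum.inl u) := by simp [hω']
              simpa [litForm, Form.eval, this] using (hu.1 ▸ hbω)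
            | false =>
              have hcω : ω c = false := by simpa [litForm, Form.eval] using hbω
              have hcv : c ≠ Sum.inr v := by
                intro h; rw [h, hωv] at hcω; exact Bool.noConfusion hcω
              have : ω' c = ω c := by simp [hω', hcv]
              simpa [litForm, Form.eval, this] using hbω
    exact iff_of_false hA hB

end Main

/-- for any structural causal model `M` and intervention `i` on internal
variables, the Bochman transformation of the intervened model, `CS(M_i)`, and the
intervened Bochman transformation, `CS(M)_i`, have the same causal worlds. -/
theorem bochman_commutes_with_intervention {U V : Type}
    (M : PSCM U V) (i : V → Option Bool) :
    ∀ ω : U ⊕ V → Bool,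
      (M.intervene i).bochman.CausalWorld ω ↔ (M.bochman.intervene i).CausalWorld ω := by
  exact bochman_main_aux M i
end

section
/- In a deterministic causal system CS = (Δ, E, O) whose causal structure is acyclic and which applies default negation, for every truth assignment e on the pure external premises there exists exactly one causal world ω of (Δ, E, ∅) with ω ∩ E^pure = e. -/
variable {α : Type}

/-- An atomic causal rule `b₁ ∧ ... ∧ bₙ ⇒ p`: body a list of literals, head an atom. -/
structure ARule (α : Type) where
  body : List (α × Bool)
  head : α

/-- The rule as a (cause, effect) pair of formulas. -/
def ARule.pair (r : ARule α) : Form α × Form α :=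
  (conjList (r.body.map litForm), Form.atom r.head)

/-- The causal system determined by an atomic causal theory `Δ`, external premises `E`
and no observations. -/
def mkSystem (Δ : Set (ARule α)) (E : Set (α × Bool)) : CausalSystem α where
  Δ := {p | ∃ r ∈ Δ, p = r.pair}
  E := E
  O := ∅

/-- Edge `p → q` of the causal structure: `p` occurs in the body of a rule with head `q`. -/
def edge (Δ : Set (ARule α)) (p q : α) : Prop :=
  ∃ r ∈ Δ, r.head = q ∧ ∃ b : Bool, (p, b) ∈ r.body

/-- The pure external premises: atoms `p` with both `p` and `¬p` external. -/
def purePrem (E : Set (α × Bool)) : Set α := {p | (p, true) ∈ E ∧ (p, false) ∈ E}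

/-! ### Auxiliary lemmas -/

section Aux

lemma eval_litForm (v : α → Bool) (l : α × Bool) :
    (litForm l).eval v = true ↔ v l.1 = l.2 := by
  obtain ⟨p, b⟩ := l
  cases b <;> simp [litForm, Form.eval]

lemma eval_conjList (v : α → Bool) (L : List (Form α)) :
    (conjList L).eval v = true ↔ ∀ φ ∈ L, φ.eval v = true := by
  induction L with
  | nil => simp [conjList, Form.eval]
  | cons φ L ih =>
      constructor
      · intro h ψ hψ
        have h' : φ.eval v = true ∧ (conjList L).eval v = true := by
          simpa [conjList, Form.eval, Bool.and_eq_true] using h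
        rcases List.mem_cons.mp hψ with rfl | hψ
        · exact h'.1
        · exact ih.mp h'.2 ψ hψ
      · intro h
        have : φ.eval v = true ∧ (conjList L).eval v = true :=
          ⟨h φ (List.mem_cons_self), ih.mpr fun ψ hψ => h ψ (List.mem_cons_of_mem _ hψ)⟩
        simpa [conjList, Form.eval, Bool.and_eq_true] using this

lemma entails_singleton {φ ψ : Form α} (h : ∀ v : α → Bool, φ.eval v = true → ψ.eval v = true) :
    Entails {φ} ψ := fun v hv => h v (hv φ rfl)

/-- Soundness of `Derives` with respect to a pair of worlds `(v, w)` such that all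
pairs in `Δ'` hold as material implications both from `v` to `v` and from `v` to `w`. -/
lemma derives_sound2 {Δ' : Set (Form α × Form α)} {v w : α → Bool}
    (h : ∀ q ∈ Δ', (q.1.eval v = true → q.2.eval v = true) ∧
        (q.1.eval v = true → q.2.eval w = true))
    {φ ψ : Form α} (hd : Derives Δ' φ ψ) :
    (φ.eval v = true → ψ.eval v = true) ∧ (φ.eval v = true → ψ.eval w = true) := by
  induction hd with
  | base hq => exact h _ hq
  | strengthening hent _ ih =>
      exact ⟨fun hv => ih.1 (hent v fun φ' hφ' => by rwa [Set.mem_singleton_iff.mp hφ']),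
        fun hv => ih.2 (hent v fun φ' hφ' => by rwa [Set.mem_singleton_iff.mp hφ'])⟩
  | weakening _ hent ih =>
      exact ⟨fun hv => hent v fun φ' hφ' => by rw [Set.mem_singleton_iff.mp hφ']; exact ih.1 hv,
        fun hv => hent w fun φ' hφ' => by rw [Set.mem_singleton_iff.mp hφ']; exact ih.2 hv⟩
  | and _ _ ih1 ih2 =>
      exact ⟨fun hv => by simp [Form.eval, ih1.1 hv, ih2.1 hv],
        fun hv => by simp [Form.eval, ih1.2 hv, ih2.2 hv]⟩
  | top => exact ⟨fun _ => rfl, fun _ => rfl⟩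
  | bot => exact ⟨fun hv => by simpa [Form.eval] using hv, fun hv => by simpa [Form.eval] using hv⟩
  | cut _ _ ih1 ih2 =>
      exact ⟨fun hv => ih2.1 (by simp [Form.eval, hv, ih1.1 hv]),
        fun hv => ih2.2 (by simp [Form.eval, hv, ih1.1 hv])⟩
  | or _ _ ih1 ih2 =>
      constructor
      · intro hv
        rcases Bool.or_eq_true _ _ |>.mp (by simpa [Form.eval] using hv) with h' | h'
        · exact ih1.1 h'
        · exact ih2.1 h'
      · intro hv
        rcases Bool.or_eq_true _ _ |>.mp (by simpa [Form.eval] using hv) with h' | h'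
        · exact ih1.2 h'
        · exact ih2.2 h'

lemma mem_cons_self {Δ' : Set (Form α × Form α)} {Φ : Set (Form α)} {φ : Form α}
    (hφΔ : (φ, φ) ∈ Δ') (hφ : φ ∈ Φ) : φ ∈ Cons Δ' Φ := by
  refine ⟨[φ], by simpa using hφ, ?_⟩
  refine Derives.strengthening (entails_singleton fun v hv => ?_) (Derives.base hφΔ)
  exact (eval_conjList v [φ]).mp hv φ (List.mem_singleton_self _)

lemma derives_conj_of_forall {Δ' : Set (Form α × Form α)} {Φ : Set (Form α)} :
    ∀ M : List (Form α), (∀ φ ∈ M, φ ∈ Cons Δ' Φ) →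
      ∃ L : List (Form α), (∀ φ ∈ L, φ ∈ Φ) ∧ Derives Δ' (conjList L) (conjList M) := by
  intro M
  induction M with
  | nil => exact fun _ => ⟨[], by simp, Derives.top⟩
  | cons φ M ih =>
      intro hM
      obtain ⟨L1, hL1, hd1⟩ := hM φ (List.mem_cons_self)
      obtain ⟨L2, hL2, hd2⟩ := ih fun ψ hψ => hM ψ (List.mem_cons_of_mem _ hψ)
      refine ⟨L1 ++ L2, ?_, ?_⟩
      · intro ψ hψ
        rcases List.mem_append.mp hψ with h | h
        · exact hL1 ψ h
        · exact hL2 ψ h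
      · have e1 : Derives Δ' (conjList (L1 ++ L2)) φ :=
          Derives.strengthening (entails_singleton fun v hv => by
            exact (eval_conjList v L1).mpr (fun ψ hψ =>
              (eval_conjList v _).mp hv ψ (List.mem_append.mpr (Or.inl hψ)))) hd1
        have e2 : Derives Δ' (conjList (L1 ++ L2)) (conjList M) :=
          Derives.strengthening (entails_singleton fun v hv => by
            exact (eval_conjList v L2).mpr (fun ψ hψ =>
              (eval_conjList v _).mp hv ψ (List.mem_append.mpr (Or.inr hψ)))) hd2
        exact Derives.and e1 e2

lemma cons_of_derives {Δ' : Set (Form α × Form α)} {Φ : Set (Form α)} {ψ : Form α}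
    (M : List (Form α)) (hM : ∀ φ ∈ M, φ ∈ Cons Δ' Φ)
    (hd : Derives Δ' (conjList M) ψ) : ψ ∈ Cons Δ' Φ := by
  obtain ⟨L, hL, hdL⟩ := derives_conj_of_forall M hM
  refine ⟨L, hL, Derives.cut hdL (Derives.strengthening (entails_singleton fun v hv => ?_) hd)⟩
  exact ((Bool.and_eq_true _ _).mp hv).2

lemma edge_wf {α : Type} [Fintype α] (Δ : Set (ARule α))
    (h : ∀ p : α, ¬ Relation.TransGen (edge Δ) p p) : WellFounded (edge Δ) := by
  have h1 : IsIrrefl α (Relation.TransGen (edge Δ)) := ⟨h⟩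
  have h2 : IsTrans α (Relation.TransGen (edge Δ)) := ⟨fun _ _ _ => Relation.TransGen.trans⟩
  have hw : WellFounded (Relation.TransGen (edge Δ)) :=
    Finite.wellFounded_of_trans_of_irrefl _
  exact Subrelation.wf (fun h' => Relation.TransGen.single h') hw

open Classical in
/-- The canonical world, defined by recursion along the acyclic causal structure. -/
noncomputable def canon (Δ : Set (ARule α)) (E : Set (α × Bool)) (e : α → Bool)
    (hwf : WellFounded (edge Δ)) : α → Bool :=
  hwf.fix (fun p ih =>
    if p ∈ purePrem E then e p
    else if ∃ r ∈ Δ, r.head = p ∧ ∀ qb ∈ r.body, ∀ h : edge Δ qb.1 p, ih qb.1 h = qb.2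
      then true else false)

open Classical in
lemma canon_eq (Δ : Set (ARule α)) (E : Set (α × Bool)) (e : α → Bool)
    (hwf : WellFounded (edge Δ)) (p : α) :
    canon Δ E e hwf p = if p ∈ purePrem E then e p
      else if ∃ r ∈ Δ, r.head = p ∧ ∀ qb ∈ r.body, canon Δ E e hwf qb.1 = qb.2
        then true else false := by
  classical
  conv_lhs => rw [canon]
  rw [WellFounded.fix_eq]
  have hiff : (∃ r ∈ Δ, r.head = p ∧ ∀ qb ∈ r.body, ∀ h : edge Δ qb.1 p,
        hwf.fix (fun p ih =>
          if p ∈ purePrem E then e p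
          else if ∃ r ∈ Δ, r.head = p ∧ ∀ qb ∈ r.body, ∀ h : edge Δ qb.1 p, ih qb.1 h = qb.2
            then true else false) qb.1 = qb.2)
      ↔ (∃ r ∈ Δ, r.head = p ∧ ∀ qb ∈ r.body, canon Δ E e hwf qb.1 = qb.2) := by
    constructor
    · rintro ⟨r, hr, hh, hb⟩
      refine ⟨r, hr, hh, fun qb hqb => ?_⟩
      exact hb qb hqb ⟨r, hr, hh, qb.2, by simpa using hqb⟩
    · rintro ⟨r, hr, hh, hb⟩
      exact ⟨r, hr, hh, fun qb hqb _ => hb qb hqb⟩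
  by_cases hp : p ∈ purePrem E
  · simp [hp]
  · simp only [if_neg hp]
    by_cases hs : ∃ r ∈ Δ, r.head = p ∧ ∀ qb ∈ r.body, canon Δ E e hwf qb.1 = qb.2
    · rw [if_pos (hiff.mpr hs), if_pos hs]
    · rw [if_neg (fun h => hs (hiff.mp h)), if_neg hs]

lemma canon_pure {Δ : Set (ARule α)} {E : Set (α × Bool)} {e : α → Bool}
    {hwf : WellFounded (edge Δ)} {p : α} (hp : p ∈ purePrem E) :
    canon Δ E e hwf p = e p := by rw [canon_eq, if_pos hp]

lemma canon_not_pure {Δ : Set (ARule α)} {E : Set (α × Bool)} {e : α → Bool}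
    {hwf : WellFounded (edge Δ)} {p : α} (hp : p ∉ purePrem E) :
    (canon Δ E e hwf p = true ↔
      ∃ r ∈ Δ, r.head = p ∧ ∀ qb ∈ r.body, canon Δ E e hwf qb.1 = qb.2) := by
  classical
  rw [canon_eq, if_neg hp]
  by_cases hs : ∃ r ∈ Δ, r.head = p ∧ ∀ qb ∈ r.body, canon Δ E e hwf qb.1 = qb.2 <;>
    simp [hs]

lemma rule_pair_mem_closure {Δ : Set (ARule α)} {E : Set (α × Bool)} {r : ARule α}
    (hr : r ∈ Δ) : r.pair ∈ (mkSystem Δ E).closure := Or.inl ⟨r, hr, rfl⟩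

lemma lit_pair_mem_closure {Δ : Set (ARule α)} {E : Set (α × Bool)} {l : α × Bool}
    (hl : l ∈ E) : (litForm l, litForm l) ∈ (mkSystem Δ E).closure := Or.inr ⟨l, hl, rfl⟩

lemma lit_mem_cons {Δ : Set (ARule α)} {E : Set (α × Bool)} {v : α → Bool} {l : α × Bool}
    (hl : l ∈ E) (hv : (litForm l).eval v = true) :
    litForm l ∈ Cons (mkSystem Δ E).closure ((mkSystem Δ E).extTrue v) :=
  mem_cons_self (lit_pair_mem_closure hl) ⟨l, hl, rfl, hv⟩

/-- If every body literal of a rule is a consequence, then so is the head. -/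
lemma head_mem_cons {Δ : Set (ARule α)} {E : Set (α × Bool)} {v : α → Bool} {r : ARule α}
    (hr : r ∈ Δ)
    (hb : ∀ qb ∈ r.body, litForm qb ∈ Cons (mkSystem Δ E).closure ((mkSystem Δ E).extTrue v)) :
    Form.atom r.head ∈ Cons (mkSystem Δ E).closure ((mkSystem Δ E).extTrue v) := by
  refine cons_of_derives (r.body.map litForm) ?_ (Derives.base (rule_pair_mem_closure hr))
  intro φ hφ
  obtain ⟨qb, hqb, rfl⟩ := List.mem_map.mp hφ
  exact hb qb hqb

end Aux

/-- in an acyclic deterministic causal system applying default negation,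
every truth assignment on the pure external premises extends to exactly one causal
world of `(Δ, E, ∅)`. -/
theorem acyclic_defaultNegation_unique_causalWorld {α : Type} [Fintype α]
    (Δ : Set (ARule α)) (E : Set (α × Bool))
    (hAcyclic : ∀ p : α, ¬ Relation.TransGen (edge Δ) p p)
    (hDefNeg : ∀ p : α, (p, false) ∈ E)
    (hNoHead : ∀ p : α, (p, true) ∈ E → ∀ r ∈ Δ, r.head ≠ p) :
    ∀ e : α → Bool, ∃! v : α → Bool,
      (mkSystem Δ E).CausalWorld v ∧ ∀ p ∈ purePrem E, v p = e p := by
  classical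
  intro e
  have hwf : WellFounded (edge Δ) := edge_wf Δ hAcyclic
  set c := canon Δ E e hwf with hcdef
  -- heads of rules are never pure premises
  have hHeadNotPure : ∀ r ∈ Δ, r.head ∉ purePrem E :=
    fun r hr hp => hNoHead r.head hp.1 r hr rfl
  -- destructuring the explanatory closure
  have hclo : ∀ q ∈ (mkSystem Δ E).closure,
      (∃ r ∈ Δ, q = r.pair) ∨ (∃ l ∈ E, q = (litForm l, litForm l)) := by
    intro q hq
    rcases hq with h | h
    · obtain ⟨r, hr, rfl⟩ := h; exact Or.inl ⟨r, hr, rfl⟩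
    · exact Or.inr h
  -- every literal of the canonical world is a consequence
  have lemA : ∀ p : α, litForm (p, c p) ∈
      Cons (mkSystem Δ E).closure ((mkSystem Δ E).extTrue c) := by
    intro p
    refine hwf.induction
      (C := fun p => litForm (p, c p) ∈ Cons (mkSystem Δ E).closure ((mkSystem Δ E).extTrue c))
      p ?_
    intro p ih
    by_cases hb : c p = true
    · rw [hb]
      by_cases hp : p ∈ purePrem E
      · exact lit_mem_cons hp.1 ((eval_litForm c (p, true)).mpr hb)
      · obtain ⟨r, hr, hh, hbody⟩ := (canon_not_pure hp).mp hb
        have hhead : Form.atom r.head ∈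
            Cons (mkSystem Δ E).closure ((mkSystem Δ E).extTrue c) := by
          refine head_mem_cons hr ?_
          intro qb hqb
          have hedge : edge Δ qb.1 p := ⟨r, hr, hh, qb.2, by simpa using hqb⟩
          have hlit : litForm (qb.1, c qb.1) ∈
              Cons (mkSystem Δ E).closure ((mkSystem Δ E).extTrue c) := ih qb.1 hedge
          have hcb : c qb.1 = qb.2 := by rw [hcdef]; exact hbody qb hqb
          have hq2 : (qb.1, c qb.1) = qb := by rw [hcb]
          rwa [hq2] at hlit
        rw [hh] at hhead
        simpa [litForm] using hhead
    · have hb' : c p = false := by simpa using hb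
      rw [hb']
      exact lit_mem_cons (hDefNeg p) ((eval_litForm c (p, false)).mpr hb')
  -- the closure pairs hold as material implications in the canonical world
  have himp : ∀ q ∈ (mkSystem Δ E).closure,
      q.1.eval c = true → q.2.eval c = true := by
    intro q hq
    rcases hclo q hq with ⟨r, hr, rfl⟩ | ⟨l, hl, rfl⟩
    · intro hbody
      simp only [ARule.pair] at hbody ⊢
      have hball : ∀ qb ∈ r.body, c qb.1 = qb.2 := fun qb hqb =>
        (eval_litForm c qb).mp
          ((eval_conjList c _).mp hbody _ (List.mem_map_of_mem hqb))
      have hp : r.head ∉ purePrem E := hHeadNotPure r hr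
      have : c r.head = true := (canon_not_pure hp).mpr ⟨r, hr, rfl, hball⟩
      simpa [Form.eval] using this
    · exact fun h => h
  -- the canonical world is a causal world
  have hworld : (mkSystem Δ E).CausalWorld c := by
    constructor
    · apply Set.Subset.antisymm
      · rintro ψ ⟨L, hL, hd⟩
        have hLtrue : (conjList L).eval c = true := by
          refine (eval_conjList c L).mpr fun φ hφ => ?_
          obtain ⟨l, _, rfl, hev⟩ := hL φ hφ
          exact hev
        exact (derives_sound2 (fun q hq => ⟨himp q hq, himp q hq⟩) hd).1 hLtrue
      · intro ψ hψ
        obtain ⟨L, hL, hdL⟩ := derives_conj_of_forall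
          ((Finset.univ.toList (α := α)).map fun p => litForm (p, c p))
          (by
            intro φ hφ
            obtain ⟨p, _, rfl⟩ := List.mem_map.mp hφ
            exact lemA p)
        refine ⟨L, hL, Derives.weakening hdL (entails_singleton fun u hu => ?_)⟩
        have huc : u = c := by
          funext p
          exact (eval_litForm u (p, c p)).mp
            ((eval_conjList u _).mp hu _
              (List.mem_map_of_mem (Finset.mem_toList.mpr (Finset.mem_univ p))))
        rw [huc]
        exact hψ
    · intro o ho
      exact absurd ho (by simp [mkSystem])
  refine ⟨c, ⟨hworld, fun p hp => canon_pure hp⟩, ?_⟩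
  rintro v ⟨⟨hW, -⟩, hpure⟩
  -- helper: for the causal world v, bodies produce heads
  have whead : ∀ r ∈ Δ, (∀ qb ∈ r.body, v qb.1 = qb.2) → v r.head = true := by
    intro r hr hb
    have : Form.atom r.head ∈ Cons (mkSystem Δ E).closure ((mkSystem Δ E).extTrue v) := by
      refine head_mem_cons hr fun qb hqb => ?_
      rw [hW]
      exact (eval_litForm v qb).mpr (hb qb hqb)
    rw [hW] at this
    simpa [worldSet, Form.eval] using this
  have key : ∀ p : α, v p = c p := by
    intro p
    refine hwf.induction (C := fun p => v p = c p) p ?_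
    intro p ih
    by_cases hp : p ∈ purePrem E
    · rw [hpure p hp, hcdef, canon_pure hp]
    · have hiff2 : (∃ r ∈ Δ, r.head = p ∧ ∀ qb ∈ r.body, v qb.1 = qb.2) ↔ c p = true := by
        rw [canon_not_pure hp]
        constructor
        · rintro ⟨r, hr, hh, hb⟩
          refine ⟨r, hr, hh, fun qb hqb => ?_⟩
          have ih' : v qb.1 = c qb.1 := ih qb.1 ⟨r, hr, hh, qb.2, by simpa using hqb⟩
          rw [← hcdef, ← ih']
          exact hb qb hqb
        · rintro ⟨r, hr, hh, hb⟩
          refine ⟨r, hr, hh, fun qb hqb => ?_⟩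
          have ih' : v qb.1 = c qb.1 := ih qb.1 ⟨r, hr, hh, qb.2, by simpa using hqb⟩
          rw [ih', hcdef]
          exact hb qb hqb
      by_cases hS : ∃ r ∈ Δ, r.head = p ∧ ∀ qb ∈ r.body, v qb.1 = qb.2
      · obtain ⟨r, hr, hh, hb⟩ := hS
        have hv : v p = true := hh ▸ whead r hr hb
        rw [hv, hiff2.mp ⟨r, hr, hh, hb⟩]
      · have hcf : c p = false := by
          cases hcv : c p
          · rfl
          · exact absurd (hiff2.mpr hcv) hS
        rw [hcf]
        cases hvv : v p
        · rfl
        · exfalso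
          -- flip p to false: soundness forbids producing p
          have hsound : ∀ q ∈ (mkSystem Δ E).closure,
              (q.1.eval v = true → q.2.eval v = true) ∧
              (q.1.eval v = true → q.2.eval (Function.update v p false) = true) := by
            intro q hq
            rcases hclo q hq with ⟨r', hr', rfl⟩ | ⟨l, hl, rfl⟩
            · have hbimp : (r'.pair.1).eval v = true → ∀ qb ∈ r'.body, v qb.1 = qb.2 := by
                intro hbv qb hqb
                simp only [ARule.pair] at hbv
                exact (eval_litForm v qb).mp
                  ((eval_conjList v _).mp hbv _ (List.mem_map_of_mem hqb))
              constructor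
              · intro hbv
                have := whead r' hr' (hbimp hbv)
                simpa [ARule.pair, Form.eval] using this
              · intro hbv
                have hhead : v r'.head = true := whead r' hr' (hbimp hbv)
                have hne : r'.head ≠ p := fun hhp => hS ⟨r', hr', hhp, hbimp hbv⟩
                show (Form.atom r'.head).eval (Function.update v p false) = true
                simpa [Form.eval, Function.update_of_ne hne] using hhead
            · refine ⟨fun h => h, fun hlv => ?_⟩
              obtain ⟨q, b⟩ := l
              by_cases hlp : q = p
              · subst hlp
                cases b
                · have : v q = false := (eval_litForm v (q, false)).mp hlv
                  rw [hvv] at this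
                  exact absurd this (by simp)
                · exact absurd ⟨hl, hDefNeg q⟩ hp
              · rw [eval_litForm] at hlv ⊢
                simpa [Function.update_of_ne hlp] using hlv
          have hmem : Form.atom p ∈
              Cons (mkSystem Δ E).closure ((mkSystem Δ E).extTrue v) := by
            rw [hW]
            simpa [worldSet, Form.eval] using hvv
          obtain ⟨L, hL, hd⟩ := hmem
          have hLv : (conjList L).eval v = true := by
            refine (eval_conjList v L).mpr fun φ hφ => ?_
            obtain ⟨l, _, rfl, hev⟩ := hL φ hφ
            exact hev
          have hfinal := (derives_sound2 hsound hd).2 hLv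
          simp [Form.eval, Function.update_self] at hfinal
  exact funext key
end
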